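/- arXiv:2301.05922 — 2 statements merged into one kernel-verified Lean document; each statement's English description precedes it below -/
import Mathlib

section
/- Let p be an odd prime. For every h ∈ {0, 1, …, p−1}, the determinant of the matrix γ1·γ2^h − 1 over ℤ/p²ℤ is equal to p times a unit of ℤ/p²ℤ. -/
/-- The matrix `γ1 ∈ GL_{p-1}(ℤ/p²ℤ)`: the `(i+1, i)`-entry equals `1` for
`1 ≤ i ≤ p-2` (one-based indexing), all entries of the last column equal `-1`, and all
other entries are `0`; this is the companion matrix of `x^{p-1} + ⋯ + x + 1`. -/
def gamma1 (p : ℕ) : Matrix (Fin (p - 1)) (Fin (p - 1)) (ZMod (p ^ 2)) :=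
  fun i j => if (j : ℕ) = p - 2 then -1 else if (i : ℕ) = (j : ℕ) + 1 then 1 else 0

/-- The matrix `γ2 = (p+1)·Id ∈ GL_{p-1}(ℤ/p²ℤ)`. -/
def gamma2 (p : ℕ) : Matrix (Fin (p - 1)) (Fin (p - 1)) (ZMod (p ^ 2)) :=
  ((p : ZMod (p ^ 2)) + 1) • 1

open Matrix Finset

def auxM {R : Type*} [CommRing R] (c : R) (n : ℕ) : Matrix (Fin n) (Fin n) R :=
  fun i j => (if (j : ℕ) = n - 1 then -c else if (i : ℕ) = (j : ℕ) + 1 then c else 0)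
    - (if i = j then 1 else 0)

theorem auxM_det {R : Type*} [CommRing R] (c : R) (n : ℕ) :
    (auxM c (n + 1)).det = (-1) ^ (n + 1) * ∑ k ∈ range (n + 2), c ^ k := by
  induction n with
  | zero =>
    simp [auxM, Matrix.det_fin_one, Finset.sum_range_succ]
    ring
  | succ n ih =>
    rw [Matrix.det_succ_row_zero]
    -- minor at column 0
    have hsub0 : (auxM c (n + 2)).submatrix Fin.succ ((0 : Fin (n+2)).succAbove)
        = auxM c (n + 1) := by
      ext i j
      simp only [Fin.succAbove_zero, Matrix.submatrix_apply, auxM, Fin.val_succ,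
        Fin.succ_inj, Nat.add_sub_cancel]
      congr 1
      simp [Nat.succ_inj]
    -- minor at the last column
    have hsublast : ((auxM c (n + 2)).submatrix Fin.succ
        ((Fin.last (n+1)).succAbove)).det = c ^ (n + 1) := by
      rw [Fin.succAbove_last]
      have htri : (((auxM c (n + 2)).submatrix Fin.succ Fin.castSucc)).BlockTriangular id := by
        intro i j hij
        simp only [id] at hij
        have hj := j.isLt
        have h1 : ¬ ((j : ℕ) = n + 1) := by omega
        have h2 : ¬ ((i : ℕ) + 1 = (j : ℕ) + 1) := by
          have : (j : ℕ) < (i : ℕ) := hij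
          omega
        have h3 : ¬ (i.succ = j.castSucc) := by
          simp only [Fin.ext_iff, Fin.val_succ, Fin.coe_castSucc]
          have : (j : ℕ) < (i : ℕ) := hij
          omega
        simp [Matrix.submatrix_apply, auxM, h1, h2, h3]
        exact fun hc => absurd hc (by have : (j : ℕ) < (i : ℕ) := hij; omega)
      rw [Matrix.det_of_upperTriangular htri]
      have hdiag : ∀ i : Fin (n+1),
          ((auxM c (n + 2)).submatrix Fin.succ Fin.castSucc) i i = c := by
        intro i
        have hi := i.isLt
        have h1 : ¬ ((i : ℕ) = n + 1) := by omega
        have h3 : ¬ (i.succ = i.castSucc) := by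
          simp [Fin.ext_iff]
        simp [Matrix.submatrix_apply, auxM, h1, h3]
      rw [Finset.prod_congr rfl (fun i _ => hdiag i)]
      simp
    rw [Fin.sum_univ_castSucc, Fin.sum_univ_succ]
    have hzero : ∀ j : Fin n, (auxM c (n+2)) 0 (j.succ.castSucc) = 0 := by
      intro j
      have hj := j.isLt
      have h1 : ¬ ((j.succ.castSucc : ℕ) = n + 1) := by
        simp only [Fin.coe_castSucc, Fin.val_succ]; omega
      have h2 : ¬ ((0 : Fin (n+2)) : ℕ) = (j.succ.castSucc : ℕ) + 1 := by
        simp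
      have h3 : ¬ ((0 : Fin (n+2)) = j.succ.castSucc) := by
        simp [Fin.ext_iff]
      simp [auxM, h2, h3]
      rw [if_neg (by omega), if_neg (Fin.succ_ne_zero _).symm]
      simp
    simp only [hzero, mul_zero, zero_mul, Finset.sum_const_zero, add_zero,
      Fin.castSucc_zero]
    rw [hsub0, hsublast, ih]
    have e0 : (auxM c (n+2)) 0 0 = -1 := by
      have h1 : ¬ ((0:ℕ) = n + 1) := by omega
      simp [auxM, h1]
    have elast : (auxM c (n+2)) 0 (Fin.last (n+1)) = -c := by
      have h3 : ¬ ((0 : Fin (n+2)) = Fin.last (n+1)) := by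
        simp [Fin.ext_iff]
      simp [auxM, Fin.val_last, h3]
    rw [e0, elast]
    simp only [Fin.val_last, Fin.val_zero]
    rw [Finset.sum_range_succ (fun k => c^k) (n+2), Finset.sum_range_succ (fun k => c^k) (n+1)]
    ring

theorem auxM_det' {R : Type*} [CommRing R] (c : R) (n : ℕ) (hn : 1 ≤ n) :
    (auxM c n).det = (-1) ^ n * ∑ k ∈ range (n + 1), c ^ k := by
  obtain ⟨m, rfl⟩ : ∃ m, n = m + 1 := ⟨n - 1, by omega⟩
  exact auxM_det c m

lemma one_add_p_pow (p m : ℕ) :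
    ((p : ZMod (p ^ 2)) + 1) ^ m = 1 + (m : ZMod (p ^ 2)) * p := by
  have hp2 : ((p : ZMod (p ^ 2))) ^ 2 = 0 := by
    rw [← Nat.cast_pow, ZMod.natCast_self]
  induction m with
  | zero => simp
  | succ n ih =>
    push_cast
    linear_combination ((p : ZMod (p ^ 2)) + 1) * ih + (n : ZMod (p ^ 2)) * hp2

lemma geomSumP (p h : ℕ) (hp : p.Prime) (hodd : Odd p) :
    ∑ k ∈ range p, (((p : ZMod (p ^ 2)) + 1) ^ h) ^ k = (p : ZMod (p ^ 2)) := by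
  have key : ∀ k, (((p : ZMod (p ^ 2)) + 1) ^ h) ^ k
      = 1 + ((h * k : ℕ) : ZMod (p ^ 2)) * (p : ZMod (p ^ 2)) := by
    intro k; rw [← pow_mul, one_add_p_pow]
  rw [Finset.sum_congr rfl fun k _ => key k, Finset.sum_add_distrib]
  have hdiv : p ∣ ∑ k ∈ range p, k := by
    have h2 : (∑ k ∈ range p, k) * 2 = p * (p - 1) := Finset.sum_range_id_mul_two p
    have : p ∣ (∑ k ∈ range p, k) * 2 := ⟨p - 1, h2.symm ▸ rfl⟩
    rcases (hp.dvd_mul.mp this) with h | h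
    · exact h
    · exfalso
      obtain ⟨m, hm⟩ := hodd
      have h2le := Nat.le_of_dvd (by norm_num) h
      have hge := hp.two_le
      omega
  obtain ⟨t, ht⟩ := hdiv
  have hz : (∑ k ∈ range p, ((h * k : ℕ) : ZMod (p ^ 2)) * (p : ZMod (p ^ 2))) = 0 := by
    rw [← Finset.sum_mul, ← Nat.cast_sum, ← Finset.mul_sum, ht]
    push_cast
    ring_nf
    rw [← Nat.cast_pow, ZMod.natCast_self]
    ring
  rw [hz]
  simp



/-- For an odd prime `p` and every `h ∈ {0, 1, …, p-1}`, the
determinant of `γ1·γ2^h - 1` over `ℤ/p²ℤ` equals `p` times a unit of `ℤ/p²ℤ`. -/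
theorem det_gamma1_gamma2_pow_sub_one
    (p : ℕ) (hp : p.Prime) (hodd : Odd p) (h : ℕ) (hh : h < p) :
    ∃ u : (ZMod (p ^ 2))ˣ,
      (gamma1 p * gamma2 p ^ h - 1).det = (p : ZMod (p ^ 2)) * (u : ZMod (p ^ 2)) := by
  have hp3 : 3 ≤ p := by
    obtain ⟨m, hm⟩ := hodd
    have := hp.two_le
    omega
  set c := ((p : ZMod (p ^ 2)) + 1) ^ h with hc
  have hmat : gamma1 p * gamma2 p ^ h - 1 = auxM c (p - 1) := by
    have hg2 : gamma2 p ^ h = c • (1 : Matrix (Fin (p-1)) (Fin (p-1)) (ZMod (p^2))) := by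
      rw [gamma2, smul_pow, one_pow]
    rw [hg2, mul_smul_comm, mul_one]
    ext i j
    simp only [auxM, gamma1, Matrix.sub_apply, Matrix.smul_apply, Matrix.one_apply,
      smul_eq_mul, mul_ite, mul_neg, mul_one, mul_zero]
    have e2 : (p - 1 - 1) = p - 2 := by omega
    rw [e2]
  rw [hmat, auxM_det' c (p - 1) (by omega)]
  have hrange : (p - 1) + 1 = p := by omega
  rw [hrange]
  have heven : Even (p - 1) := Nat.Odd.sub_odd hodd odd_one
  rw [heven.neg_one_pow, one_mul, hc, geomSumP p h hp hodd]
  exact ⟨1, by simp⟩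
end

section
/- Let p be an odd prime and let V be the subgroup of (ℤ/p²ℤ)^{p−1} consisting of those vectors whose coordinates sum to an element of p·(ℤ/p²ℤ), i.e., sum to 0 modulo p. For every h ∈ {0, 1, …, p−1}, the image of the linear map (ℤ/p²ℤ)^{p−1} → (ℤ/p²ℤ)^{p−1} given by multiplication by the matrix γ1·γ2^h − 1 is exactly V. -/
open Finset Matrix

/-- Auxiliary sequence used to solve the linear system. -/
def Wfun {R : Type*} [CommRing R] (u t : R) (v' : ℕ → R) (i : ℕ) : R :=
  -(∑ k ∈ range (i+1), u ^ (i - k) * v' k) - t * u * (∑ j ∈ range (i+1), u ^ j)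

lemma Wfun_zero {R : Type*} [CommRing R] (u t : R) (v' : ℕ → R) :
    Wfun u t v' 0 = -v' 0 - t * u := by simp [Wfun]

lemma Wfun_succ {R : Type*} [CommRing R] (u t : R) (v' : ℕ → R) (i : ℕ) :
    Wfun u t v' (i+1) = u * Wfun u t v' i - u * t - v' (i+1) := by
  unfold Wfun
  rw [Finset.sum_range_succ (fun k => u ^ (i+1-k) * v' k) (i+1), geom_sum_succ,
    Finset.sum_congr rfl (fun k hk => show u ^ (i+1-k) * v' k = u * (u ^ (i-k) * v' k) by
      have hk' : k ≤ i := by simpa [Nat.lt_succ_iff] using hk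
      rw [show i+1-k = (i-k)+1 by omega, pow_succ]; ring), ← Finset.mul_sum]
  simp; ring

lemma gamma1_mulVec (p : ℕ) (hp : 2 ≤ p) (w : Fin (p-1) → ZMod (p^2)) (i : Fin (p-1)) :
    (gamma1 p).mulVec w i =
      (if h : 0 < i.1 then w ⟨i.1 - 1, by omega⟩ else 0) - w ⟨p - 2, by omega⟩ := by
  have hi := i.2
  have key : ∀ j : Fin (p-1), gamma1 p i j * w j =
      (if j = (⟨p-2, by omega⟩ : Fin (p-1)) then -w j else 0) +
      (if h : 0 < i.1 then (if j = (⟨i.1-1, by omega⟩ : Fin (p-1)) then w j else 0) else 0) := by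
    intro j
    have hj := j.2
    simp only [gamma1, Fin.ext_iff]
    split_ifs <;> first | ring1 | (exfalso; omega)
  have hmv : (gamma1 p).mulVec w i = ∑ j, gamma1 p i j * w j := by
    simp [Matrix.mulVec, dotProduct]
  rw [hmv, Finset.sum_congr rfl (fun j _ => key j), Finset.sum_add_distrib,
    Finset.sum_ite_eq' univ (⟨p-2, by omega⟩ : Fin (p-1)) (fun j => -w j)]
  rcases Nat.eq_zero_or_pos i.1 with h0 | h0
  · have hneg : ¬ 0 < i.1 := by omega
    simp only [hneg, dif_neg, dite_false]
    simp
  · simp only [h0, dite_true, dif_pos]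
    rw [Finset.sum_ite_eq' univ (⟨i.1-1, by omega⟩ : Fin (p-1)) (fun j => w j)]
    simp
    ring

/-- Let `p` be an odd prime and let `V ⊆ (ℤ/p²ℤ)^{p-1}` be the
subgroup of vectors whose coordinates sum to an element of `p·(ℤ/p²ℤ)` (i.e. sum to `0`
modulo `p`). For every `h ∈ {0, 1, …, p-1}`, the image of the linear map on
`(ℤ/p²ℤ)^{p-1}` given by multiplication by `γ1·γ2^h - 1` is exactly `V`. -/
theorem image_of_gamma1_gamma2_pow_sub_one
    (p : ℕ) (hp : p.Prime) (hodd : Odd p) (h : ℕ) (hh : h < p) :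
    Set.range (fun w : Fin (p - 1) → ZMod (p ^ 2) =>
        (gamma1 p * gamma2 p ^ h - 1).mulVec w) =
      {v : Fin (p - 1) → ZMod (p ^ 2) |
        ∃ c : ZMod (p ^ 2), ∑ i, v i = (p : ZMod (p ^ 2)) * c} := by
  obtain ⟨m, hm⟩ := hodd
  have hp2 : 2 ≤ p := hp.two_le
  have hp3 : 3 ≤ p := by omega
  set R := ZMod (p^2) with hR
  -- basic arithmetic facts in R
  have hpp : (p : R) * p = 0 := by
    have h0 : ((p^2 : ℕ) : R) = 0 := ZMod.natCast_self _
    push_cast at h0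
    linear_combination h0
  have hupow : ∀ n : ℕ, ((p : R) + 1) ^ n = 1 + (n : R) * p := by
    intro n
    induction n with
    | zero => simp
    | succ k ih =>
      rw [pow_succ, ih]
      push_cast
      linear_combination (k : R) * hpp
  have hsum_nat : ∑ j ∈ range p, j = p * m := by
    have h2 : (∑ j ∈ range p, j) * 2 = p * (p - 1) := Finset.sum_range_id_mul_two p
    have h3 : p * (p - 1) = (p * m) * 2 := by
      have hpm : p - 1 = 2 * m := by omega
      rw [hpm]; ring
    exact Nat.eq_of_mul_eq_mul_right (by norm_num) (h2.trans h3)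
  have hzsum : (∑ j ∈ range p, (j : R)) * p = 0 := by
    rw [← Nat.cast_sum, hsum_nat]
    push_cast
    linear_combination (m : R) * hpp
  set u : R := ((p : R) + 1) ^ h with hu
  have hupow' : ∀ n : ℕ, u ^ n = 1 + (h : R) * n * p := by
    intro n
    rw [hu, ← pow_mul, hupow (h * n)]
    push_cast
    exact congrArg (fun x => 1 + x * (p : R)) (Nat.cast_mul (α := ZMod (p ^ 2)) h n)
  have hgeom : ∑ j ∈ range p, u ^ j = (p : R) := by
    rw [Finset.sum_congr rfl (fun j _ => hupow' j)]
    rw [Finset.sum_add_distrib, Finset.sum_const, card_range, nsmul_eq_mul, mul_one]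
    have e1 : ∑ j ∈ range p, ((h : R) * (j : R) * (p : R))
        = (h : R) * ((∑ j ∈ range p, (j : R)) * (p : R)) := by
      rw [Finset.sum_mul, Finset.mul_sum]
      exact Finset.sum_congr rfl (fun j _ => by ring)
    rw [e1, hzsum, mul_zero, add_zero]
  have hug : u * (∑ j ∈ range (p-1), u ^ j) = (p : R) - 1 := by
    have h2 : ∑ j ∈ range (p-1+1), u ^ j = u * (∑ j ∈ range (p-1), u ^ j) + 1 := geom_sum_succ
    rw [show p-1+1 = p by omega, hgeom] at h2
    linear_combination -h2
  -- description of the linear map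
  have hM : ∀ (w : Fin (p-1) → R) (i : Fin (p-1)),
      (gamma1 p * gamma2 p ^ h - 1).mulVec w i = u * ((gamma1 p).mulVec w i) - w i := by
    intro w i
    have hmm : gamma1 p * gamma2 p ^ h = u • gamma1 p := by
      rw [gamma2, smul_pow, one_pow, Matrix.mul_smul, Matrix.mul_one]
    rw [Matrix.sub_mulVec, hmm, Matrix.smul_mulVec, Matrix.one_mulVec]
    simp [smul_eq_mul]
  ext v
  simp only [Set.mem_range, Set.mem_setOf_eq]
  constructor
  · rintro ⟨w, rfl⟩
    set w' : ℕ → R := fun k => if hk : k < p - 1 then w ⟨k, hk⟩ else 0 with hw'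
    have hwv : ∀ i : Fin (p-1), w i = w' i.1 := by
      intro i
      rw [hw']
      simp [i.2]
    have hsum1 : ∑ i, w i = ∑ k ∈ range (p-1), w' k := by
      rw [← Fin.sum_univ_eq_sum_range w' (p-1)]
      exact Finset.sum_congr rfl (fun i _ => hwv i)
    refine ⟨(h : R) * (∑ k ∈ range (p-1), w' k) - w' (p-2), ?_⟩
    have hterm : ∀ i : Fin (p-1),
        (gamma1 p * gamma2 p ^ h - 1).mulVec w i
          = u * ((if 0 < i.1 then w' (i.1 - 1) else 0) - w' (p-2)) - w' i.1 := by
      intro i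
      have hi := i.2
      have hl : w ⟨p-2, by omega⟩ = w' (p-2) := by simpa using hwv ⟨p-2, by omega⟩
      rw [hM w i, gamma1_mulVec p hp2 w i, hl, hwv i]
      rcases Nat.eq_zero_or_pos i.1 with h0 | h0
      · rw [dif_neg (by omega), if_neg (by omega)]
      · have hl2 : w ⟨i.1-1, by omega⟩ = w' (i.1-1) := by simpa using hwv ⟨i.1-1, by omega⟩
        rw [dif_pos h0, if_pos h0, hl2]
    rw [Finset.sum_congr rfl (fun i _ => hterm i), Fin.sum_univ_eq_sum_range
      (fun k => u * ((if 0 < k then w' (k - 1) else 0) - w' (p-2)) - w' k) (p-1)]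
    rw [Finset.sum_sub_distrib, ← Finset.mul_sum, Finset.sum_sub_distrib,
      Finset.sum_const, card_range, nsmul_eq_mul]
    have e1 : ∑ k ∈ range (p-1), (if 0 < k then w' (k-1) else 0)
        = (∑ k ∈ range (p-1), w' k) - w' (p-2) := by
      rw [show p-1 = (p-2)+1 by omega,
        Finset.sum_range_succ' (fun k => if 0 < k then w' (k-1) else 0) (p-2),
        Finset.sum_range_succ w' (p-2)]
      simp
    rw [e1]
    have hcast : ((p-1 : ℕ) : R) = (p : R) - 1 := by
      push_cast [Nat.cast_sub (by omega : 1 ≤ p)]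
      ring
    rw [hcast, hu, hupow h]
    linear_combination (-(h : R) * w' (p-2)) * hpp
  · rintro ⟨c, hc⟩
    set v' : ℕ → R := fun k => if hk : k < p - 1 then v ⟨k, hk⟩ else 0 with hv'
    have hvv : ∀ i : Fin (p-1), v i = v' i.1 := by
      intro i
      rw [hv']
      simp [i.2]
    have hsv : ∑ k ∈ range (p-1), v' k = (p : R) * c := by
      rw [← hc, ← Fin.sum_univ_eq_sum_range v' (p-1)]
      exact Finset.sum_congr rfl (fun i _ => (hvv i).symm)
    set D : R := ∑ k ∈ range (p-1), ((p-2-k : ℕ) : R) * v' k with hD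
    set t : R := -(c + (h : R) * D) with ht
    refine ⟨fun i => Wfun u t v' i.1, ?_⟩
    have hA : ∑ k ∈ range (p-1), u ^ (p-2-k) * v' k = (p : R) * c + D * ((h : R) * p) := by
      have e2 : ∀ k ∈ range (p-1), u ^ (p-2-k) * v' k
          = v' k + ((p-2-k : ℕ) : R) * v' k * ((h : R) * p) := by
        intro k _
        rw [hupow' (p-2-k)]
        ring
      rw [Finset.sum_congr rfl e2, Finset.sum_add_distrib, hsv, hD, Finset.sum_mul]
    have hWt : Wfun u t v' (p-2) = t := by
      rw [Wfun, show p-2+1 = p-1 by omega, hA, mul_assoc t u, hug, ht]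
      ring
    funext i
    have hi := i.2
    rw [hM, gamma1_mulVec p hp2 _ i]
    rcases Nat.eq_zero_or_pos i.1 with h0 | h0
    · rw [dif_neg (by omega)]
      show u * (0 - Wfun u t v' (p-2)) - Wfun u t v' i.1 = v i
      rw [hWt, h0, Wfun_zero, hvv i, h0]
      ring
    · rw [dif_pos h0]
      show u * (Wfun u t v' (i.1 - 1) - Wfun u t v' (p-2)) - Wfun u t v' i.1 = v i
      rw [hWt, hvv i]
      obtain ⟨n, hn⟩ : ∃ n, i.1 = n + 1 := ⟨i.1 - 1, by omega⟩
      rw [hn]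
      simp only [Nat.add_sub_cancel]
      rw [Wfun_succ]
      ring
end
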